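/- arXiv:2205.12863 — 2 statements merged into one kernel-verified Lean document; each statement's English description precedes it below -/
import Mathlib

section
/- Let Ω ⊆ ℝⁿ be nonempty compact and f : ℝⁿ → ℝᵐ continuous, with ψ(x) := max_{y ∈ Ω} min_{i} (f_i(x) - f_i(y)). Then the set of weakly efficient solutions S_w equals {x ∈ Ω : ψ(x) = 0}. -/
/-!
A point `x ∈ Ω` is always a competitor for itself, so `0` belongs to the set whose supremum
defines `ψ(x)`. Hence `ψ(x) = 0` says exactly that no `y ∈ Ω` makes `min_i (f_i(x) - f_i(y))`
positive, i.e. that no `y` improves every objective strictly. Compactness of `Ω` and continuity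
of `f` only serve to make that set bounded above, so that `sSup` is the true supremum.
-/

open Set

theorem Finite.lt_ciInf_iff {ι α : Type*} [Finite ι] [Nonempty ι]
    [ConditionallyCompleteLinearOrder α] {g : ι → α} {a : α} :
    a < ⨅ i, g i ↔ ∀ i, a < g i := by
  obtain ⟨i₀, hi₀⟩ := exists_eq_ciInf_of_finite (f := g)
  exact ⟨fun h i => h.trans_le (_root_.ciInf_le (finite_range g).bddBelow i),
    fun h => hi₀ ▸ h i₀⟩

theorem Continuous.ciInf_of_finite {X ι α : Type*} [TopologicalSpace X] [Fintype ι] [Nonempty ι]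
    [ConditionallyCompleteLinearOrder α] [TopologicalSpace α] [OrderClosedTopology α]
    {g : ι → X → α} (hg : ∀ i, Continuous (g i)) :
    Continuous fun x => ⨅ i, g i x := by
  simp only [← Finset.inf'_univ_eq_ciInf]
  exact Continuous.finset_inf'_apply Finset.univ_nonempty fun i _ => hg i

theorem csSup_eq_iff_forall_le_of_mem {α : Type*} [ConditionallyCompleteLattice α] {s : Set α}
    {a : α} (hs : BddAbove s) (ha : a ∈ s) : sSup s = a ↔ ∀ b ∈ s, b ≤ a :=
  ⟨fun h _ hb => h ▸ le_csSup hs hb, fun h => IsGreatest.csSup_eq ⟨ha, h⟩⟩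

section WeakEfficiency

variable {X ι : Type*} [Finite ι] [Nonempty ι] {f : X → ι → ℝ}

theorem forall_lt_iff_pos_iInf_sub (x y : X) :
    (∀ i, f y i < f x i) ↔ 0 < ⨅ i, (f x i - f y i) := by
  simp only [Finite.lt_ciInf_iff, sub_pos]

theorem not_exists_forall_lt_iff_iInf_sub_nonpos (Ω : Set X) (x : X) :
    (¬ ∃ y ∈ Ω, ∀ i, f y i < f x i) ↔ ∀ y ∈ Ω, ⨅ i, (f x i - f y i) ≤ 0 := by
  simp only [forall_lt_iff_pos_iInf_sub, not_exists, not_and, not_lt]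

end WeakEfficiency

theorem stmt_2_general {n m : ℕ} (hm : 0 < m)
    (Ω : Set (EuclideanSpace ℝ (Fin n))) (hcpt : IsCompact Ω)
    (f : EuclideanSpace ℝ (Fin n) → Fin m → ℝ) (hf : Continuous f) :
    {x | x ∈ Ω ∧ ¬ ∃ y ∈ Ω, ∀ i, f y i < f x i} =
      {x | x ∈ Ω ∧ sSup ((fun y => ⨅ i, (f x i - f y i)) '' Ω) = 0} := by
  have : Nonempty (Fin m) := ⟨⟨0, hm⟩⟩
  ext x
  refine and_congr_right fun hx => ?_
  have hcont : Continuous fun y => ⨅ i, (f x i - f y i) :=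
    Continuous.ciInf_of_finite fun i => continuous_const.sub ((continuous_apply i).comp hf)
  have hzero : (0 : ℝ) ∈ (fun y => ⨅ i, (f x i - f y i)) '' Ω :=
    ⟨x, hx, by simp⟩
  rw [not_exists_forall_lt_iff_iInf_sub_nonpos,
    csSup_eq_iff_forall_le_of_mem (hcpt.image hcont).bddAbove hzero, forall_mem_image]

/-- S_w = {x ∈ Ω : ψ(x) = 0}. -/
theorem stmt_2 {n m : ℕ} (hm : 0 < m)
    (Ω : Set (EuclideanSpace ℝ (Fin n))) (hΩ : Ω.Nonempty) (hcpt : IsCompact Ω)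
    (f : EuclideanSpace ℝ (Fin n) → Fin m → ℝ) (hf : Continuous f) :
    {x | x ∈ Ω ∧ ¬ ∃ y ∈ Ω, ∀ i, f y i < f x i} =
      {x | x ∈ Ω ∧ sSup ((fun y => ⨅ i, (f x i - f y i)) '' Ω) = 0} :=
  stmt_2_general hm Ω hcpt f hf
end

section
/- Let Ω ⊆ ℝⁿ be nonempty compact and f : ℝⁿ → ℝᵐ continuous. Then for every d > 0 there exists δ > 0 such that for all ε ∈ ℝᵐ₊ with max_i ε_i < δ, every weakly ε-efficient solution x satisfies dist(x, S_w) < d; that is, S_w^ε ⊆ S_w + d·B where B is the closed unit ball. -/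
/-!
The points of `Ω` at distance at least `d` from `S_w` form a compact set `K` on which every point is
strictly dominated by some point of `Ω`. Strict domination is an open condition, so compactness
makes it uniform: there is `δ > 0` such that every `x ∈ K` is dominated with margin `δ` in each
objective. No weakly `ε`-efficient point with `max ε < δ` survives such a domination, so none lies
in `K`.
-/

open Filter Topology

theorem IsCompact.exists_pos_forall_dominated_add {X ι : Type*} [TopologicalSpace X] [Finite ι]
    {K : Set X} (hK : IsCompact K) {f : X → ι → ℝ} (hf : Continuous f) {Ω : Set X}
    (hdom : ∀ x ∈ K, ∃ y ∈ Ω, ∀ i, f y i < f x i) :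
    ∃ δ > 0, ∀ x ∈ K, ∃ y ∈ Ω, ∀ i, f y i + δ < f x i := by
  have hnear : ∀ᶠ δ in 𝓝 (0 : ℝ), ∀ x ∈ K, ∃ y ∈ Ω, ∀ i, f y i + δ < f x i := by
    refine hK.eventually_forall_of_forall_eventually fun x hx => ?_
    obtain ⟨y, hyΩ, hy⟩ := hdom x hx
    have hcoord : ∀ i, ∀ᶠ z : ℝ × X in 𝓝 (0, x), f y i + z.1 < f z.2 i := fun i =>
      ContinuousAt.eventually_lt (by fun_prop) (by fun_prop) (by simpa using hy i)
    exact (eventually_all.2 hcoord).mono fun z hz => ⟨y, hyΩ, hz⟩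
  obtain ⟨δ, hδ, hpos⟩ :=
    ((hnear.filter_mono (nhdsWithin_le_nhds (s := Set.Ioi 0))).and self_mem_nhdsWithin).exists
  exact ⟨δ, hpos, hδ⟩

theorem stmt_7_general {n m : ℕ}
    (Ω : Set (EuclideanSpace ℝ (Fin n))) (hcpt : IsCompact Ω)
    (f : EuclideanSpace ℝ (Fin n) → Fin m → ℝ) (hf : Continuous f)
    (d : ℝ) (hd : 0 < d) :
    ∃ δ > 0, ∀ ε : Fin m → ℝ, (∀ i, 0 ≤ ε i) → (⨆ i, ε i) < δ →
      ∀ x, (x ∈ Ω ∧ ∀ y ∈ Ω, ∃ i, f y i - f x i + ε i ≥ 0) →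
        Metric.infDist x {x' | x' ∈ Ω ∧ ¬ ∃ y ∈ Ω, ∀ i, f y i < f x' i} < d := by
  set Sw := {x' | x' ∈ Ω ∧ ¬ ∃ y ∈ Ω, ∀ i, f y i < f x' i}
  have hfar : IsCompact (Ω ∩ {x | d ≤ Metric.infDist x Sw}) :=
    hcpt.inter_right (isClosed_le continuous_const (Metric.continuous_infDist_pt Sw))
  have hdom : ∀ x ∈ Ω ∩ {x | d ≤ Metric.infDist x Sw}, ∃ y ∈ Ω, ∀ i, f y i < f x i := by
    rintro x ⟨hxΩ, hxd : d ≤ _⟩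
    by_contra hx
    linarith [Metric.infDist_zero_of_mem (show x ∈ Sw from ⟨hxΩ, hx⟩)]
  obtain ⟨δ, hδ, hunif⟩ := hfar.exists_pos_forall_dominated_add hf hdom
  refine ⟨δ, hδ, fun ε _ hεδ x ⟨hxΩ, hxeff⟩ => not_le.1 fun hxd => ?_⟩
  obtain ⟨y, hyΩ, hy⟩ := hunif x ⟨hxΩ, hxd⟩
  obtain ⟨i, hi⟩ := hxeff y hyΩ
  linarith [hy i, le_ciSup (Set.finite_range ε).bddAbove i]

/-- S_w^ε ⊆ S_w + d·B whenever max_i ε_i is small enough. -/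
theorem stmt_7 {n m : ℕ} (hm : 0 < m)
    (Ω : Set (EuclideanSpace ℝ (Fin n))) (hΩ : Ω.Nonempty) (hcpt : IsCompact Ω)
    (f : EuclideanSpace ℝ (Fin n) → Fin m → ℝ) (hf : Continuous f)
    (d : ℝ) (hd : 0 < d) :
    ∃ δ > 0, ∀ ε : Fin m → ℝ, (∀ i, 0 ≤ ε i) → (⨆ i, ε i) < δ →
      ∀ x, (x ∈ Ω ∧ ∀ y ∈ Ω, ∃ i, f y i - f x i + ε i ≥ 0) →
        Metric.infDist x {x' | x' ∈ Ω ∧ ¬ ∃ y ∈ Ω, ∀ i, f y i < f x' i} < d :=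
  stmt_7_general Ω hcpt f hf d hd
end
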